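/- arXiv:0712.1018 — 2 statements merged into one kernel-verified Lean document; each statement's English description precedes it below -/
import Mathlib

section
/- For every n ≥ 1 and every prime p there exist infinitely many polynomials f ∈ Z_p[x₁,…,x_n], homogeneous and nonconstant with f(0)=0, that are strongly elliptic modulo p. -/
/-!
Since `a ^ (p - 1) = 1` for `a ∈ 𝔽_p^×`, the polynomial `1 - ∏ i, (1 - X i ^ (p - 1))` equals `1` at
every nonzero point of `𝔽_p^n`. Expanding the product and raising each monomial
`∏ i ∈ S, X i ^ (p - 1)` to the power `n! / #S`, which does not change its values on `𝔽_p^n`, gives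
a form `F` over `ℤ_p`, homogeneous of degree `(p - 1) n!`, whose reduction vanishes only at `0`.
The powers `F ^ (m + 1)` have pairwise distinct degrees.
-/

noncomputable section

namespace PadicHeat

variable (p : ℕ) [Fact p.Prime]

/-- Reduction modulo `p` of a polynomial with coefficients in `ℤ_p`. -/
def modP (n : ℕ) (f : MvPolynomial (Fin n) ℤ_[p]) : MvPolynomial (Fin n) (ZMod p) :=
  MvPolynomial.map (PadicInt.toZMod) f

/-- `f` is strongly elliptic modulo `p`: for every nonempty `I ⊆ {1,…,n}`, the reduction of `f`
modulo `p` has no zeros on the stratum `{x ∈ 𝔽_p^n : x i ≠ 0 ↔ i ∈ I}`. -/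
def StronglyElliptic (n : ℕ) (f : MvPolynomial (Fin n) ℤ_[p]) : Prop :=
  ∀ I : Finset (Fin n), I.Nonempty →
    ∀ x : Fin n → ZMod p, (∀ i, x i ≠ 0 ↔ i ∈ I) →
      MvPolynomial.eval x (modP p n f) ≠ 0

open MvPolynomial Finset Nat

theorem _root_.Finset.sum_nonempty_powerset_neg_one_pow_succ {α R : Type*} [Ring R]
    {I : Finset α} (hI : I.Nonempty) :
    ∑ S ∈ I.powerset with S.Nonempty, (-1 : R) ^ (#S + 1) = 1 := by
  classical
  have h := sum_powerset_neg_one_pow_card_of_nonempty hI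
  rw [← add_sum_erase _ _ (empty_mem_powerset I), card_empty, pow_zero] at h
  have hZ : ∑ S ∈ I.powerset with S.Nonempty, (-1 : ℤ) ^ (#S + 1) = 1 := by
    simp only [nonempty_iff_ne_empty, filter_ne', pow_succ, mul_neg_one, sum_neg_distrib]
    linarith
  exact_mod_cast congrArg (Int.cast : ℤ → R) hZ

theorem _root_.Finset.card_dvd_factorial_card {σ : Type*} [Fintype σ] {S : Finset σ}
    (hS : S.Nonempty) : #S ∣ (Fintype.card σ)! :=
  Nat.dvd_factorial (card_pos.2 hS) (card_le_univ S)

theorem _root_.MvPolynomial.IsHomogeneous.eval_zero {σ R : Type*} [CommSemiring R]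
    {f : MvPolynomial σ R} {d : ℕ} (hf : f.IsHomogeneous d) (hd : d ≠ 0) :
    eval (0 : σ → R) f = 0 := by
  rw [MvPolynomial.eval_zero, constantCoeff_eq, hf.coeff_eq_zero]
  simpa using hd.symm

section InclusionExclusionForm

variable (σ R : Type*) [Fintype σ] [CommRing R]

/-- The homogenization of `1 - ∏ i, (1 - X i ^ e)` in which the monomial `∏ i ∈ S, X i ^ e` is
raised to the power `(card σ)! / #S`. -/
def inclusionExclusionForm (e : ℕ) : MvPolynomial σ R :=
  ∑ S ∈ univ.powerset with S.Nonempty,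
    (-1) ^ (#S + 1) * ∏ i ∈ S, X i ^ (e * ((Fintype.card σ)! / #S))

variable {σ R}

theorem isHomogeneous_inclusionExclusionForm (e : ℕ) :
    (inclusionExclusionForm σ R e).IsHomogeneous (e * (Fintype.card σ)!) := by
  refine IsHomogeneous.sum _ _ _ fun S hS => ?_
  have h := ((isHomogeneous_C σ (-1 : R)).pow (#S + 1)).mul
    (IsHomogeneous.prod S _ _ fun i _ => (isHomogeneous_X R i).pow (e * ((Fintype.card σ)! / #S)))
  convert h using 1
  · simp
  · rw [zero_mul, zero_add, sum_const, smul_eq_mul, one_mul, mul_left_comm,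
      Nat.mul_div_cancel' (card_dvd_factorial_card (mem_filter.1 hS).2)]

theorem map_inclusionExclusionForm {R' : Type*} [CommRing R'] (g : R →+* R') (e : ℕ) :
    map g (inclusionExclusionForm σ R e) = inclusionExclusionForm σ R' e := by
  simp [inclusionExclusionForm]

theorem eval_inclusionExclusionForm {e : ℕ} {I : Finset σ} (hI : I.Nonempty) {x : σ → R}
    (hxI : ∀ i ∈ I, x i ^ e = 1) (hxIc : ∀ i ∉ I, x i ^ e = 0) :
    eval x (inclusionExclusionForm σ R e) = 1 := by
  classical
  have hterm : ∀ S ∈ {S ∈ (univ : Finset σ).powerset | S.Nonempty},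
      eval x ((-1) ^ (#S + 1) * ∏ i ∈ S, X i ^ (e * ((Fintype.card σ)! / #S))) =
        if S ⊆ I then (-1) ^ (#S + 1) else 0 := by
    intro S hS
    have hS : S.Nonempty := (mem_filter.1 hS).2
    have hq : (Fintype.card σ)! / #S ≠ 0 := (Nat.div_pos
      (Nat.le_of_dvd (factorial_pos _) (card_dvd_factorial_card hS)) (card_pos.2 hS)).ne'
    simp only [map_mul, map_pow, map_neg, map_one, map_prod, eval_X, pow_mul]
    split_ifs with h
    · rw [prod_eq_one fun i hi => by rw [hxI i (h hi), one_pow], mul_one]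
    · obtain ⟨i, hiS, hiI⟩ := not_subset.1 h
      rw [prod_eq_zero hiS (by rw [hxIc i hiI, zero_pow hq]), mul_zero]
  rw [inclusionExclusionForm, map_sum, sum_congr rfl hterm, ← sum_filter]
  convert sum_nonempty_powerset_neg_one_pow_succ hI using 2
  ext S
  simp [and_comm]

theorem inclusionExclusionForm_ne_zero [Nonempty σ] [Nontrivial R] (e : ℕ) :
    inclusionExclusionForm σ R e ≠ 0 := by
  intro h
  have h1 := eval_inclusionExclusionForm (x := fun _ : σ => (1 : R)) (e := e) univ_nonempty
    (fun _ _ => one_pow e) fun i hi => absurd (mem_univ i) hi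
  rw [h, map_zero] at h1
  exact zero_ne_one h1

theorem eval_inclusionExclusionForm_of_ne_zero {K : Type*} [Field K] [Fintype K] {x : σ → K}
    (hx : x ≠ 0) : eval x (inclusionExclusionForm σ K (Fintype.card K - 1)) = 1 := by
  classical
  obtain ⟨j, hj⟩ := Function.ne_iff.1 hx
  have hK : Fintype.card K - 1 ≠ 0 := Nat.sub_ne_zero_of_lt (Fintype.one_lt_card (α := K))
  refine eval_inclusionExclusionForm (I := {i | x i ≠ 0}) ⟨j, by simpa using hj⟩
    (fun i hi => FiniteField.pow_card_sub_one_eq_one _ (mem_filter.1 hi).2) fun i hi => ?_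
  rw [show x i = 0 by simpa using hi, zero_pow hK]

end InclusionExclusionForm

theorem stronglyElliptic_of_eval_ne_zero {n : ℕ} {f : MvPolynomial (Fin n) ℤ_[p]}
    (hf : ∀ x : Fin n → ZMod p, x ≠ 0 → eval x (modP p n f) ≠ 0) : StronglyElliptic p n f := by
  rintro I ⟨i, hi⟩ x hx
  exact hf x fun h0 => (hx i).2 hi (by simp [h0])

theorem statement16 (p : ℕ) [Fact p.Prime] (n : ℕ) (hn : 0 < n) :
    {f : MvPolynomial (Fin n) ℤ_[p] |
      f ≠ 0 ∧ (∃ d : ℕ, 0 < d ∧ f.IsHomogeneous d) ∧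
      MvPolynomial.eval (0 : Fin n → ℤ_[p]) f = 0 ∧
      StronglyElliptic p n f}.Infinite := by
  have : Nonempty (Fin n) := Fin.pos_iff_nonempty.1 hn
  have hp : 0 < p - 1 := Nat.sub_pos_of_lt (Fact.out : p.Prime).one_lt
  set F := inclusionExclusionForm (Fin n) ℤ_[p] (p - 1)
  set d := (p - 1) * (Fintype.card (Fin n))!
  have hF : F.IsHomogeneous d := isHomogeneous_inclusionExclusionForm _
  have hd : 0 < d := by positivity
  have hF0 : F ≠ 0 := inclusionExclusionForm_ne_zero _
  refine Set.infinite_of_injective_forall_mem (f := fun m : ℕ => F ^ (m + 1))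
    (fun a b hab => ?_) fun m =>
      ⟨pow_ne_zero _ hF0, ⟨d * (m + 1), by positivity, hF.pow _⟩,
        (hF.pow _).eval_zero (by positivity), stronglyElliptic_of_eval_ne_zero p fun x hx => ?_⟩
  · have hb : (F ^ (a + 1)).IsHomogeneous (d * (b + 1)) := by
      rw [show F ^ (a + 1) = F ^ (b + 1) from hab]
      exact hF.pow _
    have hdeg := (hF.pow (a + 1)).inj_right hb (pow_ne_zero _ hF0)
    simpa using Nat.eq_of_mul_eq_mul_left hd hdeg
  · have h1 := eval_inclusionExclusionForm_of_ne_zero (K := ZMod p) hx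
    rw [ZMod.card] at h1
    rw [modP, map_pow, map_inclusionExclusionForm, map_pow, h1, one_pow]
    exact one_ne_zero

end PadicHeat
end
end

section
/- Let f ∈ Z_p[x₁,…,x_n] be a nonconstant homogeneous polynomial of degree d with f(0)=0 and coefficients in Z_p^×. If f is strongly elliptic modulo p, then |f(x)|_p = ‖x‖_p^d for all x ∈ Q_p^n. -/
/-!
Write a nonzero `x` as `t • z` with `‖t‖ = ‖x‖` and `z` integral with a unit coordinate, so that
`f(x) = t ^ d * f(z)` by homogeneity. The reduction of `z` is a nonzero point of `𝔽_p^n`, lying on the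
stratum of its support, where strong ellipticity makes `f̄` nonvanishing; hence `f(z)` is a unit.
-/

noncomputable section

namespace PadicHeat

variable (p : ℕ) [Fact p.Prime]

open MvPolynomial

theorem _root_.MvPolynomial.IsHomogeneous.eval_smul {σ R : Type*} [CommSemiring R]
    {φ : MvPolynomial σ R} {d : ℕ} (hφ : φ.IsHomogeneous d) (c : R) (x : σ → R) :
    eval (c • x) φ = c ^ d * eval x φ := by
  rw [eval_eq, eval_eq, Finset.mul_sum]
  refine Finset.sum_congr rfl fun m hm => ?_
  simp only [Pi.smul_apply, smul_eq_mul, mul_pow, Finset.prod_mul_distrib,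
    Finset.prod_pow_eq_pow_sum, ← hφ.degree_eq_sum_deg_support hm]
  ring

theorem _root_.MvPolynomial.eval_comp_map {σ R S : Type*} [CommSemiring R] [CommSemiring S]
    (φ : R →+* S) (z : σ → R) (f : MvPolynomial σ R) :
    eval (φ ∘ z) (map φ f) = φ (eval z f) := by
  rw [eval_map, eval₂_comp]

theorem _root_.PadicInt.toZMod_ne_zero_iff_isUnit (a : ℤ_[p]) :
    PadicInt.toZMod a ≠ 0 ↔ IsUnit a := by
  rw [Ne, ← RingHom.mem_ker, PadicInt.ker_toZMod, IsLocalRing.mem_maximalIdeal,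
    mem_nonunits_iff, not_not]

theorem exists_eq_smul_primitive {ι : Type*} [Fintype ι] {x : ι → ℚ_[p]} (hx : x ≠ 0) :
    ∃ (t : ℚ_[p]) (z : ι → ℤ_[p]), ‖t‖ = ‖x‖ ∧ (∃ i, IsUnit (z i)) ∧
      x = t • (PadicInt.Coe.ringHom ∘ z) := by
  have : Nonempty ι := let ⟨i, _⟩ := Function.ne_iff.mp hx; ⟨i⟩
  obtain ⟨⟨i₀, hi₀ : ‖x i₀‖ = ‖x‖⟩, -⟩ := IsGreatest.pi_norm x
  have ht : x i₀ ≠ 0 := by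
    rw [← norm_pos_iff, hi₀]
    exact norm_pos_iff.mpr hx
  have hz : ∀ i, ‖x i / x i₀‖ ≤ 1 := fun i => by
    rw [norm_div, hi₀]
    exact div_le_one_of_le₀ (norm_le_pi_norm x i) (norm_nonneg x)
  refine ⟨x i₀, fun i => (⟨x i / x i₀, hz i⟩ : ℤ_[p]), hi₀, ⟨i₀, ?_⟩, ?_⟩
  · exact PadicInt.isUnit_iff.mpr (by simp [ht])
  · ext i
    exact (mul_div_cancel₀ _ ht).symm

theorem StronglyElliptic.isUnit_eval {n : ℕ} {f : MvPolynomial (Fin n) ℤ_[p]}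
    (hse : StronglyElliptic p n f) {z : Fin n → ℤ_[p]} (hz : ∃ i, IsUnit (z i)) :
    IsUnit (eval z f) := by
  classical
  obtain ⟨i₀, hi₀⟩ := hz
  rw [← PadicInt.toZMod_ne_zero_iff_isUnit, ← eval_comp_map]
  refine hse {i | PadicInt.toZMod (z i) ≠ 0} ⟨i₀, ?_⟩ _ fun i => by simp
  simpa using (PadicInt.toZMod_ne_zero_iff_isUnit p _).mpr hi₀

theorem statement17_general (p : ℕ) [Fact p.Prime] (n : ℕ)
    (f : MvPolynomial (Fin n) ℤ_[p]) (d : ℕ) (hd : 0 < d)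
    (hhom : f.IsHomogeneous d)
    (hse : StronglyElliptic p n f) :
    ∀ x : Fin n → ℚ_[p],
      ‖MvPolynomial.eval x (MvPolynomial.map (PadicInt.Coe.ringHom) f)‖ = ‖x‖ ^ d := by
  intro x
  have hhom' := hhom.map (PadicInt.Coe.ringHom (p := p))
  rcases eq_or_ne x 0 with rfl | hx
  · have h0 := hhom'.eval_smul 0 0
    rw [smul_zero, zero_pow hd.ne', zero_mul] at h0
    rw [h0, norm_zero, norm_zero, zero_pow hd.ne']
  obtain ⟨t, z, ht, hz, rfl⟩ := exists_eq_smul_primitive p hx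
  have hunit : ‖PadicInt.Coe.ringHom (eval z f)‖ = 1 :=
    PadicInt.isUnit_iff.mp (hse.isUnit_eval p hz)
  rw [hhom'.eval_smul, eval_comp_map, norm_mul, norm_pow, hunit, mul_one, ht]

theorem statement17 (p : ℕ) [Fact p.Prime] (n : ℕ) (hn : 0 < n)
    (f : MvPolynomial (Fin n) ℤ_[p]) (d : ℕ) (hd : 0 < d) (hf0 : f ≠ 0)
    (hhom : f.IsHomogeneous d)
    (heval0 : MvPolynomial.eval (0 : Fin n → ℤ_[p]) f = 0)
    (hunit : ∀ m ∈ f.support, IsUnit (f.coeff m))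
    (hse : StronglyElliptic p n f) :
    ∀ x : Fin n → ℚ_[p],
      ‖MvPolynomial.eval x (MvPolynomial.map (PadicInt.Coe.ringHom) f)‖ = ‖x‖ ^ d :=
  statement17_general p n f d hd hhom hse

end PadicHeat
end
end
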